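/- arXiv:math/0408348 — 5 statements merged into one kernel-verified Lean document; each statement's English description precedes it below -/
import Mathlib

section
/- In a finite lattice L whose set of atoms A(L) is independent (i.e., for every proper subset B of A(L), the join of B is strictly less than the join of A(L)), the Möbius function from the minimum element satisfies: M(x) = (-1)^|B| if x is the join of some subset B of atoms, and M(x) = 0 otherwise. -/
/-!
Rota's crosscut formula: in any finite lattice, `μ(⊥, x)` is the signed count
`∑ (-1)^|B|` over the sets `B` of atoms whose join is `x`, because the partial sums
`∑_{y ≤ x}` of this count are the alternating sums over the powerset of the atoms below `x`,
which vanish unless `x = ⊥`. Independence of the atoms makes `B ↦ ⋁ B` injective, so each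
signed count has at most one term.
-/

open Finset Classical

theorem eq_of_forall_sum_le_eq {α R : Type*} [Fintype α] [PartialOrder α]
    [AddCancelCommMonoid R] {f g : α → R}
    (h : ∀ x, ∑ y ∈ univ.filter (· ≤ x), f y = ∑ y ∈ univ.filter (· ≤ x), g y) : f = g := by
  funext x
  induction x using WellFoundedLT.induction with
  | _ x ih =>
    have hx : x ∈ univ.filter (· ≤ x) := by simp
    have hbelow : ∑ y ∈ (univ.filter (· ≤ x)).erase x, f y
        = ∑ y ∈ (univ.filter (· ≤ x)).erase x, g y :=
      sum_congr rfl fun y hy => by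
        obtain ⟨hyx, hy⟩ := mem_erase.1 hy
        exact ih y (lt_of_le_of_ne (by simpa using hy) hyx)
    have hsum := h x
    rw [← add_sum_erase _ _ hx, ← add_sum_erase _ _ hx, hbelow] at hsum
    exact add_right_cancel hsum

theorem sum_le_eq_ite_of_mobius {α : Type*} [Fintype α] [PartialOrder α] [OrderBot α]
    {M : α → ℤ} (hM1 : M ⊥ = 1)
    (hMrec : ∀ x : α, x ≠ ⊥ → ∑ y ∈ univ.filter (· ≤ x), M y = 0) (x : α) :
    ∑ y ∈ univ.filter (· ≤ x), M y = if x = ⊥ then 1 else 0 := by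
  split_ifs with hx
  · subst hx
    rw [show univ.filter (· ≤ (⊥ : α)) = {⊥} by ext; simp, sum_singleton, hM1]
  · exact hMrec x hx

def JoinIndependent {α : Type*} [SemilatticeSup α] [OrderBot α] (s : Finset α) : Prop :=
  ∀ B ⊂ s, B.sup id < s.sup id

namespace JoinIndependent

variable {α : Type*} [SemilatticeSup α] [OrderBot α] {s : Finset α}

theorem not_le_sup_erase (hs : JoinIndependent s) {a : α} (ha : a ∈ s) :
    ¬ a ≤ (s.erase a).sup id := by
  intro hle
  have hsup : s.sup id = (s.erase a).sup id := by
    rw [← insert_erase ha, sup_insert, id, sup_eq_right.2 hle, erase_insert_eq_erase, erase_idem]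
  exact (hs _ (erase_ssubset ha)).ne' hsup

theorem subset_of_sup_le (hs : JoinIndependent s) {B C : Finset α} (hB : B ⊆ s) (hC : C ⊆ s)
    (hle : B.sup id ≤ C.sup id) : B ⊆ C := by
  intro a haB
  by_contra haC
  have hC' : C ⊆ s.erase a := fun b hb => mem_erase.2 ⟨fun hba => haC (hba ▸ hb), hC hb⟩
  exact hs.not_le_sup_erase (hB haB)
    (((le_sup (f := id) haB).trans hle).trans (sup_mono hC'))

theorem sup_inj (hs : JoinIndependent s) {B C : Finset α} (hB : B ⊆ s) (hC : C ⊆ s)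
    (h : B.sup id = C.sup id) : B = C :=
  (hs.subset_of_sup_le hB hC h.le).antisymm (hs.subset_of_sup_le hC hB h.ge)

end JoinIndependent

noncomputable section Crosscut

variable {α : Type*} [Fintype α] [SemilatticeSup α] [OrderBot α]

variable (α) in
def atoms : Finset α := univ.filter IsAtom

theorem subset_atoms_iff {B : Finset α} : B ⊆ atoms α ↔ ∀ a ∈ B, IsAtom a := by
  simp [subset_iff, atoms]

def crosscutSum (x : α) : ℤ :=
  ∑ B ∈ (atoms α).powerset.filter (fun B => B.sup id = x), (-1) ^ B.card

theorem sum_le_crosscutSum (x : α) :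
    ∑ y ∈ univ.filter (· ≤ x), crosscutSum y = if x = ⊥ then 1 else 0 := by
  have hfiber : ∑ y ∈ univ.filter (· ≤ x), crosscutSum y
      = ∑ B ∈ (atoms α).powerset.filter (fun B => B.sup id ≤ x), (-1 : ℤ) ^ B.card := by
    rw [← sum_fiberwise_of_maps_to (t := univ.filter (· ≤ x)) (g := fun B : Finset α => B.sup id)
      fun B hB => by simpa using (mem_filter.1 hB).2]
    refine sum_congr rfl fun y hy => ?_
    rw [crosscutSum, filter_filter]
    refine sum_congr (filter_congr fun B _ => ?_) fun _ _ => rfl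
    exact ⟨fun h => ⟨h ▸ (mem_filter.1 hy).2, h⟩, And.right⟩
  have hbelow : (atoms α).powerset.filter (fun B => B.sup id ≤ x)
      = ((atoms α).filter (· ≤ x)).powerset := by
    ext B
    simp only [mem_filter, mem_powerset, Finset.sup_le_iff, id, subset_iff]
    grind
  have hempty : (atoms α).filter (· ≤ x) = ∅ ↔ x = ⊥ := by
    simp only [filter_eq_empty_iff, atoms, mem_filter, mem_univ, true_and]
    exact ⟨fun h => (eq_bot_or_exists_atom_le x).resolve_right fun ⟨a, ha, hax⟩ => h ha hax,
      fun hx a ha hax => ha.1 (le_bot_iff.1 (hx ▸ hax))⟩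
  rw [hfiber, hbelow, sum_powerset_neg_one_pow_card]
  simp only [hempty]

theorem crosscutSum_sup (hInd : JoinIndependent (atoms α)) {B : Finset α} (hB : B ⊆ atoms α) :
    crosscutSum (B.sup id) = (-1) ^ B.card := by
  have hfiber : (atoms α).powerset.filter (fun C => C.sup id = B.sup id) = {B} := by
    ext C
    simp only [mem_filter, mem_powerset, mem_singleton]
    exact ⟨fun ⟨hC, h⟩ => hInd.sup_inj hC hB h, by rintro rfl; exact ⟨hB, rfl⟩⟩
  rw [crosscutSum, hfiber, sum_singleton]

theorem crosscutSum_eq_zero {x : α}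
    (h : ¬ ∃ B : Finset α, (∀ a ∈ B, IsAtom a) ∧ x = B.sup id) : crosscutSum x = 0 :=
  sum_eq_zero fun B hB => by
    obtain ⟨hB, hx⟩ := mem_filter.1 hB
    exact absurd ⟨B, subset_atoms_iff.1 (mem_powerset.1 hB), hx.symm⟩ h

end Crosscut

open Classical in
/-- Sagan's theorem: in a finite lattice whose set of atoms is independent, the
Möbius function from the bottom element is (-1)^|B| on joins of sets B of atoms and
0 elsewhere.  Here `M` is the Möbius function μ(⊥, ·), characterized by M ⊥ = 1 and
∑_{y ≤ x} M y = 0 for x ≠ ⊥. -/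
theorem stmt3 {α : Type*} [Fintype α] [Lattice α] [BoundedOrder α]
    (hInd : ∀ B : Finset α, B ⊂ Finset.univ.filter (fun a => IsAtom a) →
      B.sup id < (Finset.univ.filter (fun a => IsAtom a)).sup id)
    (M : α → ℤ) (hM1 : M ⊥ = 1)
    (hMrec : ∀ x : α, x ≠ ⊥ → ∑ y ∈ Finset.univ.filter (fun y => y ≤ x), M y = 0)
    (x : α) :
    (∀ B : Finset α, (∀ a ∈ B, IsAtom a) → x = B.sup id → M x = (-1) ^ B.card) ∧
    ((¬ ∃ B : Finset α, (∀ a ∈ B, IsAtom a) ∧ x = B.sup id) → M x = 0) := by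
  have hM : M = crosscutSum := eq_of_forall_sum_le_eq fun x => by
    rw [sum_le_eq_ite_of_mobius hM1 hMrec, sum_le_crosscutSum]
  subst hM
  exact ⟨fun B hB hx => hx ▸ crosscutSum_sup hInd (subset_atoms_iff.2 hB), crosscutSum_eq_zero⟩
end

section
/- The operations 'over' and 'under' on tree names, defined by v̄ ↗ w̄ = (v̄, n ▷ w̄) and v̄ ↖ w̄ = (v̄, n + w̄) where n is the length of v̄ and (k ▷ w̄)_i = k + w_i if w_i ≠ 1 and 1 if w_i = 1, are both associative and satisfy the L-algebra axiom (u ↗ v) ↖ w = u ↗ (v ↖ w). -/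
/-- Planar rooted binary trees. -/
inductive PB : Type
  | leaf : PB
  | node : PB → PB → PB
  deriving DecidableEq

namespace PB

/-- The name (vector encoding) of a planar binary tree. -/
def name : PB → List ℕ
  | leaf => []
  | node l r => name l ++ [1] ++ (name r).map (fun x => x + (name l).length + 1)

/-- Number of internal (trivalent) vertices. -/
def nodes : PB → ℕ
  | leaf => 0
  | node l r => nodes l + nodes r + 1

/-- Mirror image of a tree. -/
def mirror : PB → PB
  | leaf => leaf
  | node l r => node (mirror r) (mirror l)

/-- Left subtree. -/
def left : PB → PB
  | leaf => leaf
  | node l _ => l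

/-- Right subtree. -/
def right : PB → PB
  | leaf => leaf
  | node _ r => r

end PB

/-- Grafting on vectors: v ∨ w = (v, 1, w + (len v + 1)). -/
def graft (v w : List ℕ) : List ℕ := v ++ [1] ++ w.map (fun x => x + v.length + 1)

/-- A list is a tree name if it is the name of some planar binary tree. -/
def TreeName (v : List ℕ) : Prop := ∃ t : PB, PB.name t = v

/-- Componentwise order on vectors (of the same length). -/
def vle (v w : List ℕ) : Prop := List.Forall₂ (· ≤ ·) v w

/-- Strict componentwise order. -/
def vlt (v w : List ℕ) : Prop := vle v w ∧ v ≠ w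

/-- k ▷ w : shift all coordinates ≠ 1 by k, fix coordinates equal to 1. -/
def rsh (k : ℕ) (w : List ℕ) : List ℕ := w.map (fun x => if x = 1 then 1 else x + k)

/-- The over operation on tree names: v ↗ w = (v, len v ▷ w). -/
def overOp (v w : List ℕ) : List ℕ := v ++ rsh v.length w

/-- The under operation on tree names: v ↖ w = (v, len v + w). -/
def under (v w : List ℕ) : List ℕ := v ++ w.map (fun x => x + v.length)

/-- Componentwise interval of lists. -/
def listIcc : List ℕ → List ℕ → Finset (List ℕ)
  | a :: as, b :: bs => ((Finset.Icc a b) ×ˢ listIcc as bs).image fun p => p.1 :: p.2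
  | _, _ => {[]}

open Classical in
/-- Componentwise interval of tree names. -/
noncomputable def treeIcc (a b : List ℕ) : Finset (List ℕ) :=
  (listIcc a b).filter TreeName

/-- Dendriform addition of tree names: all tree names t with v ↗ w ≤ t ≤ v ↖ w. -/
noncomputable def dplus (v w : List ℕ) : Finset (List ℕ) :=
  treeIcc (overOp v w) (under v w)

theorem PB.pos_of_mem_name : ∀ (t : PB), ∀ x ∈ t.name, 0 < x
  | .leaf => by simp [PB.name]
  | .node l r => by
    simp only [PB.name, List.mem_append, List.mem_map, List.mem_singleton]
    rintro x ((hx | rfl) | ⟨y, -, rfl⟩)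
    · exact pos_of_mem_name l x hx
    · exact one_pos
    · omega

theorem TreeName.pos {v : List ℕ} (hv : TreeName v) : ∀ x ∈ v, 0 < x := by
  obtain ⟨t, rfl⟩ := hv
  exact PB.pos_of_mem_name t

@[simp]
theorem length_rsh (k : ℕ) (w : List ℕ) : (rsh k w).length = w.length :=
  List.length_map _

theorem rsh_append (k : ℕ) (v w : List ℕ) : rsh k (v ++ w) = rsh k v ++ rsh k w :=
  List.map_append

-- A zero entry would be moved to `b = 1` by the inner shift and then frozen by the outer one.
theorem rsh_rsh {w : List ℕ} (hw : 0 ∉ w) (a b : ℕ) : rsh a (rsh b w) = rsh (a + b) w := by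
  simp only [rsh, List.map_map]
  refine List.map_congr_left fun x hx => ?_
  have : x ≠ 0 := fun h => hw (h ▸ hx)
  by_cases hx1 : x = 1
  · simp [hx1]
  · have : x + b ≠ 1 := by omega
    simp only [Function.comp_apply, if_neg hx1, if_neg this]
    omega

theorem rsh_map_add {w : List ℕ} {k : ℕ} (hw : ∀ x ∈ w, x + k ≠ 1) (a : ℕ) :
    rsh a (w.map (· + k)) = w.map (· + (a + k)) := by
  simp only [rsh, List.map_map]
  refine List.map_congr_left fun x hx => ?_
  simp only [Function.comp_apply, if_neg (hw x hx)]
  omega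

theorem overOp_assoc (u v : List ℕ) {w : List ℕ} (hw : 0 ∉ w) :
    overOp (overOp u v) w = overOp u (overOp v w) := by
  simp [overOp, rsh_append, rsh_rsh hw]

theorem under_assoc (u v w : List ℕ) : under (under u v) w = under u (under v w) := by
  simp only [under, List.length_append, List.length_map, List.map_append, List.map_map,
    List.append_assoc]
  congr 2
  exact List.map_congr_left fun x _ => by simp only [Function.comp_apply]; omega

theorem under_overOp (u : List ℕ) {v w : List ℕ} (hw : ∀ x ∈ w, x + v.length ≠ 1) :
    under (overOp u v) w = overOp u (under v w) := by
  simp [overOp, under, rsh_append, rsh_map_add hw]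

theorem stmt6_general (u v w : List ℕ) (hw : TreeName w) (hv0 : v ≠ []) :
    overOp (overOp u v) w = overOp u (overOp v w) ∧
    under (under u v) w = under u (under v w) ∧
    under (overOp u v) w = overOp u (under v w) := by
  have hv : 0 < v.length := List.length_pos_iff.mpr hv0
  refine ⟨overOp_assoc u v fun h => (hw.pos 0 h).false, under_assoc u v w,
    under_overOp u fun x hx => ?_⟩
  have := hw.pos x hx
  omega

/-- The over and under operations are associative and satisfy the associative
L-algebra axiom (u ↗ v) ↖ w = u ↗ (v ↖ w). -/
theorem stmt6 (u v w : List ℕ) (hu : TreeName u) (hv : TreeName v) (hw : TreeName w)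
    (hu0 : u ≠ []) (hv0 : v ≠ []) (hw0 : w ≠ []) :
    overOp (overOp u v) w = overOp u (overOp v w) ∧
    under (under u v) w = under u (under v w) ∧
    under (overOp u v) w = overOp u (under v w) :=
  stmt6_general u v w hw hv0
end

section
/- For any tree name w̄ ∈ N^{n+m}, there exist unique tree names ū ∈ N^n and v̄ ∈ N^m such that ū ↗ v̄ ≤ w̄ ≤ ū ↖ v̄ (componentwise). -/
/-!
The sandwich `u ↗ v ≤ w ≤ u ↖ v` pins down every coordinate: the first `n` coordinates of `w`
are those of `u`, and a later coordinate `y` of `w` lies between `n ▷ x` and `x + n` for the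
corresponding coordinate `x ≥ 1` of `v`, which forces `x = max 1 (y - n)`. Conversely, these
`u` and `v` are tree names, namely those of the two trees obtained by cutting the tree of `w`
after its `n`-th vertex in in-order.
-/

/-- On coordinates `≥ 1` this undoes both `k ▷ ·` and `· + k`. -/
def unshift (k : ℕ) (w : List ℕ) : List ℕ := w.map fun y => max 1 (y - k)

theorem one_le_of_mem_unshift {k : ℕ} {w : List ℕ} : ∀ x ∈ unshift k w, 1 ≤ x := by
  simp [unshift]

namespace PB

theorem one_le_of_mem_name : ∀ (t : PB), ∀ x ∈ t.name, 1 ≤ x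
  | leaf => by simp [name]
  | node l r => by
    simp only [name, List.mem_append, List.mem_singleton, List.mem_map]
    rintro x ((hx | rfl) | ⟨y, -, rfl⟩)
    exacts [one_le_of_mem_name l x hx, le_rfl, by omega]

/-- The coordinates of `t.name` are indexed by the vertices of `t` in in-order; `t.take n` and
`t.drop n` are the trees carried by the first `n` of them and by the rest. -/
def take : PB → ℕ → PB
  | leaf, _ => leaf
  | node l r, n => if n ≤ l.name.length then l.take n else node l (r.take (n - l.name.length - 1))

def drop : PB → ℕ → PB
  | leaf, _ => leaf
  | node l r, n => if n ≤ l.name.length then node (l.drop n) r else r.drop (n - l.name.length - 1)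

theorem name_take : ∀ (t : PB) (n : ℕ), (t.take n).name = t.name.take n
  | leaf, n => by simp [take, name]
  | node l r, n => by
    rw [take]
    split_ifs with h
    · rw [name_take l n, name, List.append_assoc, List.take_append_of_le_length h]
    · have hlen : (l.name ++ [1]).length ≤ n := by simp; omega
      rw [name, name, name_take r, List.take_append, List.take_of_length_le hlen, ← List.map_take,
        List.length_append, List.length_singleton, Nat.sub_sub]

theorem name_drop : ∀ (t : PB) (n : ℕ), (t.drop n).name = unshift n (t.name.drop n)
  | leaf, n => by simp [drop, name, unshift]
  | node l r, n => by
    rw [drop]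
    split_ifs with h
    · have hlen : n ≤ (l.name ++ [1]).length := by simp; omega
      rw [name, name, name_drop l n, List.drop_append_of_le_length hlen,
        List.drop_append_of_le_length h]
      simp only [unshift, List.map_append, List.map_cons, List.map_nil, List.map_map,
        List.length_map, List.length_drop]
      congr 1
      · simp
      · refine List.map_congr_left fun x hx => ?_
        have := one_le_of_mem_name r x hx
        simp only [Function.comp]
        omega
    · have hlen : (l.name ++ [1]).length ≤ n := by simp; omega
      rw [name_drop r, name, List.drop_append, List.drop_eq_nil_of_le hlen, List.nil_append,
        unshift, unshift, ← List.map_drop, List.map_map, List.length_append, List.length_singleton,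
        Nat.sub_sub]
      refine List.map_congr_left fun x hx => ?_
      have := one_le_of_mem_name r x (List.mem_of_mem_drop hx)
      simp only [Function.comp]
      omega

end PB

theorem vle_append_left_iff {a b w : List ℕ} :
    vle (a ++ b) w ↔ vle a (w.take a.length) ∧ vle b (w.drop a.length) := by
  refine ⟨fun h => ?_, fun ⟨ha, hb⟩ => List.take_append_drop a.length w ▸ List.rel_append ha hb⟩
  simpa [vle] using And.intro (List.forall₂_take a.length h) (List.forall₂_drop a.length h)

theorem vle_append_right_iff {a b w : List ℕ} :
    vle w (a ++ b) ↔ vle (w.take a.length) a ∧ vle (w.drop a.length) b := by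
  refine ⟨fun h => ?_, fun ⟨ha, hb⟩ => List.take_append_drop a.length w ▸ List.rel_append ha hb⟩
  simpa [vle] using And.intro (List.forall₂_take a.length h) (List.forall₂_drop a.length h)

theorem vle_antisymm {a b : List ℕ} (hab : vle a b) (hba : vle b a) : a = b := by
  induction hab with
  | nil => rfl
  | cons hxy _ ih =>
    obtain ⟨hyx, hba⟩ := List.forall₂_cons.1 hba
    rw [le_antisymm hxy hyx, ih hba]

theorem vle_antisymm_iff {a b : List ℕ} : vle a b ∧ vle b a ↔ a = b :=
  ⟨fun h => vle_antisymm h.1 h.2, fun h => h ▸ ⟨List.forall₂_refl a, List.forall₂_refl a⟩⟩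

theorem rsh_le_and_le_add_iff {k x y : ℕ} (hx : 1 ≤ x) :
    (if x = 1 then 1 else x + k) ≤ y ∧ y ≤ x + k ↔ 1 ≤ y ∧ x = max 1 (y - k) := by
  split_ifs <;> omega

theorem vle_rsh_and_vle_map_add_iff {k : ℕ} {v w : List ℕ} (hv : ∀ x ∈ v, 1 ≤ x)
    (hw : ∀ y ∈ w, 1 ≤ y) : vle (rsh k v) w ∧ vle w (v.map (· + k)) ↔ v = unshift k w := by
  induction v generalizing w with
  | nil => cases w <;> simp [vle, rsh, unshift]
  | cons x v ih =>
    cases w with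
    | nil => simp [vle, rsh, unshift]
    | cons y w =>
      simp only [List.forall_mem_cons] at hv hw
      have hxy := rsh_le_and_le_add_iff (k := k) (y := y) hv.1
      simp only [vle, rsh, unshift, List.map_cons, List.forall₂_cons, List.cons.injEq] at ih hxy ⊢
      rw [← ih hv.2 hw.2]
      tauto

theorem vle_overOp_and_vle_under_iff {u v w : List ℕ} (hv : ∀ x ∈ v, 1 ≤ x)
    (hw : ∀ y ∈ w, 1 ≤ y) : vle (overOp u v) w ∧ vle w (under u v) ↔
      u = w.take u.length ∧ v = unshift u.length (w.drop u.length) := by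
  rw [overOp, under, vle_append_left_iff, vle_append_right_iff, ← vle_rsh_and_vle_map_add_iff hv
    fun y hy => hw y (List.mem_of_mem_drop hy), ← vle_antisymm_iff]
  tauto

theorem stmt10_general (n m : ℕ) (w : List ℕ)
    (hw : TreeName w) (hl : w.length = n + m) :
    ∃! p : List ℕ × List ℕ, TreeName p.1 ∧ TreeName p.2 ∧
      p.1.length = n ∧ p.2.length = m ∧ vle (overOp p.1 p.2) w ∧ vle w (under p.1 p.2) := by
  obtain ⟨t, rfl⟩ := hw
  have htake : (t.name.take n).length = n := by simp [hl]
  refine ⟨(t.name.take n, unshift n (t.name.drop n)),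
    ⟨⟨t.take n, t.name_take n⟩, ⟨t.drop n, t.name_drop n⟩, htake, by simp [unshift, hl], ?_⟩, ?_⟩
  · rw [vle_overOp_and_vle_under_iff one_le_of_mem_unshift t.one_le_of_mem_name, htake]
    exact ⟨rfl, rfl⟩
  · rintro ⟨u, v⟩ ⟨-, ⟨s, rfl⟩, rfl, -, hsandwich⟩
    obtain ⟨hu, hv⟩ :=
      (vle_overOp_and_vle_under_iff s.one_le_of_mem_name t.one_le_of_mem_name).1 hsandwich
    exact Prod.ext hu hv

/-- For any tree name w of degree n + m there exist unique tree names u of degree n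
and v of degree m with u ↗ v ≤ w ≤ u ↖ v. -/
theorem stmt10 (n m : ℕ) (hn : 0 < n) (hm : 0 < m) (w : List ℕ)
    (hw : TreeName w) (hl : w.length = n + m) :
    ∃! p : List ℕ × List ℕ, TreeName p.1 ∧ TreeName p.2 ∧
      p.1.length = n ∧ p.2.length = m ∧ vle (overOp p.1 p.2) w ∧ vle w (under p.1 p.2) :=
  stmt10_general n m w hw hl
end

section
/- The dendriform addition of groves is well-defined: for groves (nonempty sets of tree names of fixed degree) G ⊆ N^n and H ⊆ N^m, the union over v̄ ∈ G, w̄ ∈ H of the intervals [v̄ ↗ w̄, v̄ ↖ w̄] is a grove in N^{n+m}, i.e., each tree name in the result appears for exactly one pair (v̄, w̄). -/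
/-!
On its first `len v` coordinates the interval `[v ↗ w, v ↖ w]` is the single point `v`, so every
`t ∈ v ∔ w` begins with `v`. On the remaining coordinates, a coordinate `x ≠ 1` of `w` is pinned
to `x + len v`, while `x = 1` only allows values up to `1 + len v`. Hence `t` determines `v` as its
prefix of the given length `n`, and then `w` coordinate by coordinate.
-/

theorem PB.one_le_of_mem_name_s11 : ∀ (t : PB), ∀ x ∈ t.name, 1 ≤ x
  | .leaf => by simp [PB.name]
  | .node l r => by
    simp only [PB.name, List.mem_append, List.mem_singleton, List.mem_map]
    rintro x ((hx | rfl) | ⟨y, -, rfl⟩)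
    · exact l.one_le_of_mem_name_s11 x hx
    · rfl
    · omega

theorem TreeName.one_le {v : List ℕ} (h : TreeName v) : ∀ x ∈ v, 1 ≤ x := by
  obtain ⟨t, rfl⟩ := h
  exact t.one_le_of_mem_name_s11

theorem mem_listIcc {a b t : List ℕ} (h : a.length = b.length) :
    t ∈ listIcc a b ↔ vle a t ∧ vle t b := by
  induction a generalizing b t with
  | nil =>
    obtain rfl := List.length_eq_zero_iff.1 h.symm
    simp [listIcc, vle]
  | cons x a ih =>
    obtain ⟨y, b, rfl⟩ := List.exists_cons_of_length_eq_add_one h.symm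
    cases t with
    | nil => simp [listIcc, vle]
    | cons z t =>
      simp only [listIcc, Finset.mem_image, Finset.mem_product, Finset.mem_Icc, Prod.exists,
        List.cons.injEq, ih (Nat.succ_inj.1 h)]
      simp only [vle, List.forall₂_cons]
      constructor
      · rintro ⟨z, t, ⟨⟨hxz, hzy⟩, hat, htb⟩, rfl, rfl⟩
        exact ⟨⟨hxz, hat⟩, hzy, htb⟩
      · rintro ⟨⟨hxz, hat⟩, hzy, htb⟩
        exact ⟨z, t, ⟨⟨hxz, hzy⟩, hat, htb⟩, rfl, rfl⟩

theorem mem_dplus {v w t : List ℕ} :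
    t ∈ dplus v w ↔ TreeName t ∧ vle (overOp v w) t ∧ vle t (under v w) := by
  classical
  rw [dplus, treeIcc, Finset.mem_filter, mem_listIcc (by simp [overOp, under, rsh]), and_comm]

theorem exists_eq_append_of_vle_append {v a b t : List ℕ} (ha : vle (v ++ a) t)
    (hb : vle t (v ++ b)) : ∃ u, t = v ++ u ∧ vle a u ∧ vle u b := by
  induction v generalizing t with
  | nil => exact ⟨t, rfl, ha, hb⟩
  | cons x v ih =>
    cases t with
    | nil => cases ha
    | cons y t =>
      obtain ⟨hxy, ha⟩ := List.forall₂_cons.1 ha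
      obtain ⟨hyx, hb⟩ := List.forall₂_cons.1 hb
      obtain ⟨u, rfl, hau, hub⟩ := ih ha hb
      exact ⟨u, by rw [le_antisymm hyx hxy]; rfl, hau, hub⟩

theorem List.Forall₂.and {α β : Type*} {R S : α → β → Prop} {l : List α} {u : List β}
    (hR : Forall₂ R l u) (hS : Forall₂ S l u) : Forall₂ (fun a b => R a b ∧ S a b) l u := by
  induction hR with
  | nil => exact .nil
  | cons hr _ ih =>
    obtain ⟨hs, hS⟩ := List.forall₂_cons.1 hS
    exact .cons ⟨hr, hs⟩ (ih hS)

/-- `k ▷ x ≤ y ≤ x + k`: the constraint on the coordinate of `t ∈ v ∔ w` facing the coordinate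
`x` of `w`, where `k = len v`. -/
def DplusCoord (k x y : ℕ) : Prop := (if x = 1 then 1 else x + k) ≤ y ∧ y ≤ x + k

theorem exists_eq_append_of_mem_dplus {v w t : List ℕ} (ht : t ∈ dplus v w) :
    ∃ u, t = v ++ u ∧ List.Forall₂ (DplusCoord v.length) w u := by
  obtain ⟨-, hlo, hhi⟩ := mem_dplus.1 ht
  obtain ⟨u, rfl, hlo, hhi⟩ := exists_eq_append_of_vle_append hlo hhi
  simp only [vle, rsh, List.forall₂_map_left_iff, List.forall₂_map_right_iff] at hlo hhi
  exact ⟨u, rfl, hlo.and hhi.flip⟩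

/-- A coordinate `x ≥ 2` forces `y = x + k ≥ k + 2`, while `x = 1` forces `y ≤ k + 1`. -/
theorem leftUnique_dplusCoord (k : ℕ) :
    Relator.LeftUnique fun x y => 1 ≤ x ∧ DplusCoord k x y := by
  rintro x x' y ⟨hx, hlo, hhi⟩ ⟨hx', hlo', hhi'⟩
  split_ifs at hlo hlo' <;> omega

theorem eq_of_forall₂_dplusCoord {k : ℕ} {w w' u : List ℕ} (hw : ∀ x ∈ w, 1 ≤ x)
    (hw' : ∀ x ∈ w', 1 ≤ x) (h : List.Forall₂ (DplusCoord k) w u)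
    (h' : List.Forall₂ (DplusCoord k) w' u) : w = w' :=
  List.left_unique_forall₂' (leftUnique_dplusCoord k)
    ((List.forall₂_and_left _ _).2 ⟨hw, h⟩) ((List.forall₂_and_left _ _).2 ⟨hw', h'⟩)

theorem stmt11_general (n m : ℕ) (G H : Set (List ℕ))
    (hGn : ∀ v ∈ G, TreeName v ∧ v.length = n)
    (hHm : ∀ w ∈ H, TreeName w ∧ w.length = m) :
    (∀ v ∈ G, ∀ w ∈ H, ∀ t ∈ dplus v w, TreeName t ∧ t.length = n + m) ∧
    (∀ t : List ℕ, ∀ v ∈ G, ∀ w ∈ H, ∀ v' ∈ G, ∀ w' ∈ H,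
      t ∈ dplus v w → t ∈ dplus v' w' → v = v' ∧ w = w') := by
  refine ⟨fun v hv w hw t ht => ⟨(mem_dplus.1 ht).1, ?_⟩, ?_⟩
  · obtain ⟨u, rfl, hu⟩ := exists_eq_append_of_mem_dplus ht
    rw [List.length_append, ← hu.length_eq, (hGn v hv).2, (hHm w hw).2]
  · intro t v hv w hw v' hv' w' hw' ht ht'
    obtain ⟨u, rfl, hu⟩ := exists_eq_append_of_mem_dplus ht
    obtain ⟨u', hvu, hu'⟩ := exists_eq_append_of_mem_dplus ht'
    obtain ⟨rfl, rfl⟩ := List.append_inj hvu (by rw [(hGn v hv).2, (hGn v' hv').2])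
    exact ⟨rfl, eq_of_forall₂_dplusCoord (hHm w hw).1.one_le (hHm w' hw').1.one_le hu hu'⟩

/-- Dendriform addition of groves is well defined: the union over v ∈ G, w ∈ H of
the intervals [v ↗ w, v ↖ w] consists of tree names of degree n + m, and each such
tree name arises from exactly one pair (v, w). -/
theorem stmt11 (n m : ℕ) (hn : 0 < n) (hm : 0 < m) (G H : Set (List ℕ))
    (hG : G.Nonempty) (hH : H.Nonempty)
    (hGn : ∀ v ∈ G, TreeName v ∧ v.length = n)
    (hHm : ∀ w ∈ H, TreeName w ∧ w.length = m) :
    (∀ v ∈ G, ∀ w ∈ H, ∀ t ∈ dplus v w, TreeName t ∧ t.length = n + m) ∧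
    (∀ t : List ℕ, ∀ v ∈ G, ∀ w ∈ H, ∀ v' ∈ G, ∀ w' ∈ H,
      t ∈ dplus v w → t ∈ dplus v' w' → v = v' ∧ w = w') :=
  stmt11_general n m G H hGn hHm
end

section
/- In the mirror of the vector space K[N^∞] spanned by monomials X^v̄ indexed by tree names, with operations X^ū ≺ X^v̄ = X^{ū ⊣ v̄} and X^ū ≻ X^v̄ = X^{ū ⊢ v̄} (extended by X^{a ∪ b} = X^a + X^b), the dendriform axioms hold: (x≺y)≺z = x≺(y⋆z), (x≻y)≺z = x≻(y≺z), (x⋆y)≻z = x≻(y≻z), where x⋆y = x≺y + x≻y. -/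
open Classical in
/-- The tree with a given name. -/
noncomputable def treeOf (v : List ℕ) : PB :=
  if h : ∃ t : PB, PB.name t = v then h.choose else PB.leaf

/-- The dendriform involution on tree names (mirror image of the tree). -/
noncomputable def dag (v : List ℕ) : List ℕ := PB.name (PB.mirror (treeOf v))

/-- The name of the left subtree of (the tree of) a name. -/
noncomputable def leftN (v : List ℕ) : List ℕ := PB.name (treeOf v).left

/-- The name of the right subtree of (the tree of) a name. -/
noncomputable def rightN (v : List ℕ) : List ℕ := PB.name (treeOf v).right

/-- Left dendriform operation v ⊣ w := v_l ∨ (v_r ∔ w). -/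
noncomputable def dashv (v w : List ℕ) : Finset (List ℕ) :=
  (dplus (rightN v) w).image (graft (leftN v))

/-- Right dendriform operation v ⊢ w := (v ∔ w_l) ∨ w_r. -/
noncomputable def vdash (v w : List ℕ) : Finset (List ℕ) :=
  (dplus v (leftN w)).image (fun u => graft u (rightN w))

/-- The element of the free K-module on tree names given by a grove. -/
noncomputable def groveSum (s : Finset (List ℕ)) : List ℕ →₀ ℤ :=
  ∑ t ∈ s, Finsupp.single t 1

/-- The bilinear extension of the associative product ⋆. -/
noncomputable def starF (f g : List ℕ →₀ ℤ) : List ℕ →₀ ℤ :=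
  f.sum fun v a => g.sum fun w b => (a * b) • groveSum (dplus v w)

/-- The bilinear extension of ≺ (from ⊣). -/
noncomputable def precF (f g : List ℕ →₀ ℤ) : List ℕ →₀ ℤ :=
  f.sum fun a x => g.sum fun b y => (x * y) • groveSum (dashv a b)

/-- The bilinear extension of ≻ (from ⊢). -/
noncomputable def succF (f g : List ℕ →₀ ℤ) : List ℕ →₀ ℤ :=
  f.sum fun a x => g.sum fun b y => (x * y) • groveSum (vdash a b)

/-! Write a nonempty name as a graft `a ∨ c`. A name `t = l ∨ r` in `(a ∨ c) ∔ (d ∨ e)` has its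
root either inside the first factor, and then `t = a ∨ r` with `r ∈ c ∔ (d ∨ e)`, or inside the
second one, and then `t = l ∨ e` with `l ∈ (a ∨ c) ∔ d`; this disjoint splitting is
`⋆ = ≺ + ≻`. Extending grafting bilinearly, `(F ∨ G) ≺ H = F ∨ (G ⋆ H)` and
`F ≻ (G ∨ H) = (F ⋆ G) ∨ H`, so each dendriform axiom reduces to associativity of `⋆` on smaller
names, and associativity of `⋆` follows from the three axioms after splitting `⋆` into `≺ + ≻`.
Both are proved together by induction on the total length. -/

namespace List

variable {α β : Type*} {R S : α → β → Prop}

theorem eq_of_append_cons_eq_append_cons {a c B D : List α} {x : α}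
    (h : a ++ x :: B = c ++ x :: D) (hB : x ∉ B) (hD : x ∉ D) : a = c ∧ B = D := by
  rcases append_eq_append_iff.mp h with ⟨m, rfl, hm⟩ | ⟨m, rfl, hm⟩
  · cases m with
    | nil => simpa using hm
    | cons y m => simp only [cons_append, cons.injEq] at hm; simp [hm.2] at hB
  · cases m with
    | nil => simpa using hm.symm
    | cons y m => simp only [cons_append, cons.injEq] at hm; simp [hm.2] at hD

theorem Forall₂.imp_of_mem {l₁ : List α} {l₂ : List β}
    (H : ∀ a ∈ l₁, ∀ b ∈ l₂, R a b → S a b) (h : Forall₂ R l₁ l₂) : Forall₂ S l₁ l₂ := by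
  induction h with
  | nil => exact .nil
  | cons hab _ ih =>
    exact .cons (H _ mem_cons_self _ mem_cons_self hab)
      (ih fun a ha b hb => H a (mem_cons_of_mem _ ha) b (mem_cons_of_mem _ hb))

theorem Forall₂.exists_mem_left {l₁ : List α} {l₂ : List β} (h : Forall₂ R l₁ l₂) {b : β}
    (hb : b ∈ l₂) : ∃ a ∈ l₁, R a b := by
  induction h with
  | nil => simp at hb
  | cons hab _ ih =>
    rcases mem_cons.mp hb with rfl | hb
    · exact ⟨_, mem_cons_self, hab⟩
    · obtain ⟨a, ha, hR⟩ := ih hb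
      exact ⟨a, mem_cons_of_mem _ ha, hR⟩

theorem forall₂_append_iff_of_length_eq {A B : List α} {C D : List β}
    (h : A.length = C.length) :
    Forall₂ R (A ++ B) (C ++ D) ↔ Forall₂ R A C ∧ Forall₂ R B D := by
  induction A generalizing C with
  | nil => simp [length_eq_zero_iff.mp h.symm]
  | cons a A ih =>
    obtain ⟨c, C, rfl⟩ := exists_cons_of_length_eq_add_one h.symm
    simp [ih (by simpa using h), and_assoc]

theorem length_eq_of_forall₂_append_cons {A B : List α} {C D : List β} {x : α} {y : β}
    (h : Forall₂ R (A ++ x :: B) (C ++ y :: D))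
    (hB : ∀ b ∈ B, ¬ R b y) (hD : ∀ d ∈ D, ¬ R x d) : A.length = C.length := by
  induction A generalizing C with
  | nil =>
    cases C with
    | nil => rfl
    | cons c C =>
      obtain ⟨b, hb, hR⟩ :=
        (forall₂_cons.mp h).2.exists_mem_left (mem_append_right _ mem_cons_self)
      exact absurd hR (hB b hb)
  | cons a A ih =>
    cases C with
    | nil =>
      obtain ⟨d, hd, hR⟩ :=
        (forall₂_cons.mp h).2.flip.exists_mem_left (mem_append_right _ mem_cons_self)
      exact absurd hR (hD d hd)
    | cons c C => simp [ih (forall₂_cons.mp h).2]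

end List

theorem graft_eq_append_cons (v w : List ℕ) :
    graft v w = v ++ 1 :: w.map (· + (v.length + 1)) := by
  simp [graft, Nat.add_assoc]

theorem length_graft (v w : List ℕ) : (graft v w).length = v.length + w.length + 1 := by
  simp [graft]
  omega

theorem graft_ne_nil (v w : List ℕ) : graft v w ≠ [] := by
  simp [graft]

theorem graft_append (a c s : List ℕ) :
    graft a (c ++ s) = graft a c ++ s.map (· + (a.length + 1)) := by
  simp [graft_eq_append_cons]

theorem take_graft (l r : List ℕ) (k : ℕ) :
    (graft l r).take (l.length + k + 1) = graft l (r.take k) := by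
  rw [graft_eq_append_cons, graft_eq_append_cons, List.take_append,
    List.take_of_length_le (by omega), Nat.add_assoc, Nat.add_sub_cancel_left,
    List.take_succ_cons, List.map_take]

theorem one_notMem_map_add_succ {w : List ℕ} (hw : 0 ∉ w) (k : ℕ) :
    1 ∉ w.map (· + (k + 1)) := by
  simp only [List.mem_map, not_exists, not_and]
  intro x hx h
  obtain rfl : x = 0 := by omega
  exact hw hx

theorem graft_inj {a b c d : List ℕ} (hb : 0 ∉ b) (hd : 0 ∉ d) (h : graft a b = graft c d) :
    a = c ∧ b = d := by
  rw [graft_eq_append_cons, graft_eq_append_cons] at h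
  obtain ⟨rfl, h⟩ := List.eq_of_append_cons_eq_append_cons h (one_notMem_map_add_succ hb _)
    (one_notMem_map_add_succ hd _)
  exact ⟨rfl, List.map_injective_iff.mpr (add_left_injective _) h⟩

theorem graft_right_injective (a : List ℕ) : Function.Injective (graft a) := by
  intro b c h
  rw [graft_eq_append_cons, graft_eq_append_cons] at h
  exact List.map_injective_iff.mpr (add_left_injective _)
    (List.cons_injective (List.append_cancel_left h))

namespace PB

theorem name_node (l r : PB) : name (node l r) = graft (name l) (name r) := rfl

theorem zero_notMem_name : ∀ t : PB, 0 ∉ name t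
  | leaf => by simp [name]
  | node l r => by
    rw [name_node, graft_eq_append_cons]
    simpa using zero_notMem_name l

theorem name_injective : Function.Injective name := by
  intro t₁
  induction t₁ with
  | leaf =>
    rintro (_ | _) h
    · rfl
    · exact absurd h.symm (graft_ne_nil _ _)
  | node l r ihl ihr =>
    rintro (_ | ⟨l', r'⟩) h
    · exact absurd h (graft_ne_nil _ _)
    · obtain ⟨hl, hr⟩ := graft_inj (zero_notMem_name r) (zero_notMem_name r') h
      rw [ihl hl, ihr hr]

end PB

theorem treeOf_name (t : PB) : treeOf (PB.name t) = t :=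
  PB.name_injective <| by
    rw [treeOf, dif_pos ⟨t, rfl⟩]
    exact Exists.choose_spec (p := fun s => PB.name s = PB.name t) ⟨t, rfl⟩

namespace TreeName

theorem graft {a c : List ℕ} (ha : TreeName a) (hc : TreeName c) : TreeName (graft a c) := by
  obtain ⟨s, rfl⟩ := ha
  obtain ⟨u, rfl⟩ := hc
  exact ⟨PB.node s u, rfl⟩

theorem zero_notMem {v : List ℕ} (hv : TreeName v) : 0 ∉ v := by
  obtain ⟨t, rfl⟩ := hv
  exact PB.zero_notMem_name t

theorem exists_eq_graft {v : List ℕ} (hv : TreeName v) (hv0 : v ≠ []) :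
    ∃ a c, TreeName a ∧ TreeName c ∧ v = _root_.graft a c := by
  obtain ⟨_ | ⟨l, r⟩, rfl⟩ := hv
  · exact absurd rfl hv0
  · exact ⟨_, _, ⟨l, rfl⟩, ⟨r, rfl⟩, rfl⟩

end TreeName

theorem leftN_graft {a c : List ℕ} (ha : TreeName a) (hc : TreeName c) :
    leftN (graft a c) = a := by
  obtain ⟨s, rfl⟩ := ha
  obtain ⟨u, rfl⟩ := hc
  rw [leftN, ← PB.name_node, treeOf_name]
  rfl

theorem rightN_graft {a c : List ℕ} (ha : TreeName a) (hc : TreeName c) :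
    rightN (graft a c) = c := by
  obtain ⟨s, rfl⟩ := ha
  obtain ⟨u, rfl⟩ := hc
  rw [rightN, ← PB.name_node, treeOf_name]
  rfl

theorem dashv_graft {a c : List ℕ} (ha : TreeName a) (hc : TreeName c) (w : List ℕ) :
    dashv (graft a c) w = (dplus c w).image (graft a) := by
  rw [dashv, leftN_graft ha hc, rightN_graft ha hc]

theorem vdash_graft {d e : List ℕ} (hd : TreeName d) (he : TreeName e) (v : List ℕ) :
    vdash v (graft d e) = (dplus v d).image (graft · e) := by
  rw [vdash, leftN_graft hd he, rightN_graft hd he]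

theorem listIcc_append_self (v a b : List ℕ) :
    listIcc (v ++ a) (v ++ b) = (listIcc a b).image (v ++ ·) := by
  induction v with
  | nil => simp
  | cons x v ih =>
    simp only [List.cons_append, listIcc, ih, Finset.Icc_self, Finset.singleton_product,
      Finset.map_eq_image, Finset.image_image]
    rfl

theorem mem_listIcc_map {f g : ℕ → ℕ} {w t : List ℕ} :
    t ∈ listIcc (w.map f) (w.map g) ↔ List.Forall₂ (fun x y => f x ≤ y ∧ y ≤ g x) w t := by
  induction w generalizing t with
  | nil => simp [listIcc]
  | cons x w ih =>
    simp only [List.map_cons, listIcc, Finset.mem_image, Finset.mem_product, Finset.mem_Icc, ih,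
      List.forall₂_cons_left_iff, Prod.exists]
    aesop

/-- The bounds `v ↗ w ≤ t ≤ v ↖ w` past the common prefix `v` of length `k`, entry by entry:
`k ▷ x ≤ y ≤ x + k`. -/
def ShiftIcc (k x y : ℕ) : Prop := (if x = 1 then 1 else x + k) ≤ y ∧ y ≤ x + k

theorem shiftIcc_zero_iff {x y : ℕ} : ShiftIcc 0 x y ↔ x = y := by
  unfold ShiftIcc
  split_ifs <;> omega

theorem shiftIcc_one (k : ℕ) : ShiftIcc k 1 1 := by
  simp [ShiftIcc]

theorem shiftIcc_of_ne_one {k x y : ℕ} (hx : x ≠ 1) : ShiftIcc k x y ↔ y = x + k := by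
  unfold ShiftIcc
  rw [if_neg hx]
  omega

theorem ShiftIcc.le_of_one {k y : ℕ} (h : ShiftIcc k 1 y) : y ≤ k + 1 := by
  unfold ShiftIcc at h
  omega

theorem ShiftIcc.add {k x y : ℕ} (h : ShiftIcc k x y) (m : ℕ) : ShiftIcc (k + m) x (y + m) := by
  unfold ShiftIcc at *
  split_ifs at * <;> omega

theorem shiftIcc_add_iff {k m x y : ℕ} (hy : y ≠ 0) :
    ShiftIcc (k + m) x (y + m) ↔ ShiftIcc k x y := by
  unfold ShiftIcc
  split_ifs <;> omega

theorem mem_dplus_s16 {v w t : List ℕ} :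
    t ∈ dplus v w ↔ TreeName t ∧ ∃ s, List.Forall₂ (ShiftIcc v.length) w s ∧ t = v ++ s := by
  classical
  rw [dplus, treeIcc, overOp, under, rsh, Finset.mem_filter, listIcc_append_self,
    Finset.mem_image, and_comm]
  simp only [mem_listIcc_map, eq_comm (b := t)]
  rfl

theorem TreeName.of_mem_dplus {v w t : List ℕ} (h : t ∈ dplus v w) : TreeName t :=
  (mem_dplus_s16.mp h).1

theorem length_of_mem_dplus {v w t : List ℕ} (h : t ∈ dplus v w) :
    t.length = v.length + w.length := by
  obtain ⟨-, s, hs, rfl⟩ := mem_dplus_s16.mp h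
  rw [List.length_append, hs.length_eq]

theorem dplus_nil_left {w : List ℕ} (hw : TreeName w) : dplus [] w = {w} := by
  ext t
  have : ShiftIcc 0 = (· = ·) := by ext; exact shiftIcc_zero_iff
  simp only [mem_dplus_s16, List.length_nil, this, List.forall₂_eq_eq_eq, List.nil_append,
    exists_eq_left', Finset.mem_singleton]
  exact ⟨And.right, fun h => ⟨h ▸ hw, h⟩⟩

theorem dplus_nil_right {v : List ℕ} (hv : TreeName v) : dplus v [] = {v} := by
  ext t
  simp only [mem_dplus_s16, List.forall₂_nil_left_iff, exists_eq_left, List.append_nil,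
    Finset.mem_singleton]
  exact ⟨And.right, fun h => ⟨h ▸ hv, h⟩⟩

-- The root of `graft l r` sits at position `l.length`.
theorem graft_mem_dplus_iff_of_lt {a c l r w : List ℕ} (hc : TreeName c) (hl : TreeName l)
    (hr : TreeName r) (hlt : l.length < (graft a c).length) :
    graft l r ∈ dplus (graft a c) w ↔ l = a ∧ r ∈ dplus c w := by
  have hlen : (graft a c).length = c.length + (a.length + 1) := by rw [length_graft]; ring
  constructor
  · intro h
    obtain ⟨-, s, hs, hrs⟩ := mem_dplus_s16.mp h
    obtain ⟨k, hk⟩ := Nat.exists_eq_add_of_lt hlt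
    have htake := congrArg (List.take (graft a c).length) hrs
    rw [List.take_left, hk, take_graft] at htake
    obtain ⟨rfl, hck⟩ := graft_inj (fun h0 => hr.zero_notMem (List.mem_of_mem_take h0))
      hc.zero_notMem htake
    have hr_eq : r = c ++ r.drop k := by rw [← hck, List.take_append_drop]
    rw [hr_eq, graft_append, List.append_cancel_left_eq] at hrs
    refine ⟨rfl, mem_dplus_s16.mpr ⟨hr, r.drop k, ?_, hr_eq⟩⟩
    rw [← hrs, hlen, List.forall₂_map_right_iff] at hs
    refine hs.imp_of_mem fun x _ y hy hxy => (shiftIcc_add_iff ?_).mp hxy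
    rintro rfl
    exact hr.zero_notMem (List.mem_of_mem_drop hy)
  · rintro ⟨rfl, h⟩
    obtain ⟨-, s, hs, rfl⟩ := mem_dplus_s16.mp h
    refine mem_dplus_s16.mpr ⟨hl.graft hr, s.map (· + (l.length + 1)), ?_, graft_append _ _ _⟩
    rw [hlen, List.forall₂_map_right_iff]
    exact hs.imp fun x y hxy => hxy.add _

theorem graft_mem_dplus_iff_of_prefix {v d e l r : List ℕ} (he : TreeName e) (hl : TreeName l)
    (hr : TreeName r) (hvl : v <+: l) :
    graft l r ∈ dplus v (graft d e) ↔ r = e ∧ l ∈ dplus v d := by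
  obtain ⟨s₁, rfl⟩ := hvl
  have he0 := he.zero_notMem
  have hr0 := hr.zero_notMem
  simp only [graft_eq_append_cons, List.append_assoc, List.append_cancel_left_eq, mem_dplus_s16,
    exists_eq_right', List.length_append, hl, true_and]
  constructor
  · rintro ⟨-, hs⟩
    have hds : d.length = s₁.length := by
      refine List.length_eq_of_forall₂_append_cons hs ?_ ?_
      · simp only [List.mem_map]
        rintro _ ⟨x, hx, rfl⟩ h
        have := (shiftIcc_of_ne_one (by grind)).mp h
        grind
      · simp only [List.mem_map]
        rintro _ ⟨x, hx, rfl⟩ h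
        have := h.le_of_one
        grind
    rw [List.forall₂_append_iff_of_length_eq hds, List.forall₂_cons, List.forall₂_map_left_iff,
      List.forall₂_map_right_iff] at hs
    refine ⟨?_, hs.1⟩
    rw [eq_comm, ← List.forall₂_eq_eq_eq]
    refine hs.2.2.imp_of_mem fun x hx y _ h => ?_
    have := (shiftIcc_of_ne_one (by grind)).mp h
    omega
  · rintro ⟨rfl, hs⟩
    have hds := hs.length_eq
    refine ⟨by simpa [graft_eq_append_cons] using hl.graft hr, ?_⟩
    rw [List.forall₂_append_iff_of_length_eq hds, List.forall₂_cons,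
      List.forall₂_map_left_iff, List.forall₂_map_right_iff, List.forall₂_same]
    exact ⟨hs, shiftIcc_one _, fun x hx => (shiftIcc_of_ne_one (by grind)).mpr (by omega)⟩

theorem dplus_graft_graft {a c d e : List ℕ} (ha : TreeName a) (hc : TreeName c)
    (he : TreeName e) :
    dplus (graft a c) (graft d e) =
      (dplus c (graft d e)).image (graft a) ∪ (dplus (graft a c) d).image (graft · e) := by
  ext t
  simp only [Finset.mem_union, Finset.mem_image]
  constructor
  · intro ht
    obtain ⟨htn, s, -, hts⟩ := mem_dplus_s16.mp ht
    obtain ⟨l, r, hl, hr, rfl⟩ := htn.exists_eq_graft (by simp [hts, graft_ne_nil])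
    rcases lt_or_ge l.length (graft a c).length with hlt | hle
    · obtain ⟨rfl, hr'⟩ := (graft_mem_dplus_iff_of_lt hc hl hr hlt).mp ht
      exact Or.inl ⟨r, hr', rfl⟩
    · have hpre : graft a c <+: l := List.prefix_of_prefix_length_le ⟨s, hts.symm⟩
        (by simp [graft_eq_append_cons]) hle
      obtain ⟨rfl, hl'⟩ := (graft_mem_dplus_iff_of_prefix he hl hr hpre).mp ht
      exact Or.inr ⟨l, hl', rfl⟩
  · rintro (⟨r, hr, rfl⟩ | ⟨l, hl, rfl⟩)
    · exact (graft_mem_dplus_iff_of_lt hc ha (.of_mem_dplus hr)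
        (by rw [length_graft]; omega)).mpr ⟨rfl, hr⟩
    · obtain ⟨hl', s, -, rfl⟩ := mem_dplus_s16.mp hl
      exact (graft_mem_dplus_iff_of_prefix he hl' he (List.prefix_append _ _)).mpr ⟨rfl, hl⟩

theorem disjoint_image_graft_image_graft {a c d e w : List ℕ} (he : TreeName e) :
    Disjoint ((dplus c w).image (graft a)) ((dplus (graft a c) d).image (graft · e)) := by
  simp only [Finset.disjoint_left, Finset.mem_image, not_exists, not_and]
  rintro _ ⟨r, hr, rfl⟩ l hl h
  obtain ⟨rfl, -⟩ := graft_inj he.zero_notMem (TreeName.of_mem_dplus hr).zero_notMem h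
  have := length_of_mem_dplus hl
  rw [length_graft] at this
  omega

theorem groveSum_dplus {v w : List ℕ} (hv : TreeName v) (hw : TreeName w) (hv0 : v ≠ [])
    (hw0 : w ≠ []) : groveSum (dplus v w) = groveSum (dashv v w) + groveSum (vdash v w) := by
  obtain ⟨a, c, ha, hc, rfl⟩ := hv.exists_eq_graft hv0
  obtain ⟨d, e, hd, he, rfl⟩ := hw.exists_eq_graft hw0
  rw [dashv_graft ha hc, vdash_graft hd he, dplus_graft_graft ha hc he, groveSum,
    Finset.sum_union (disjoint_image_graft_image_graft he)]
  rfl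

theorem Finsupp.supported_induction {α R : Type*} [Semiring R] {s : Set α}
    {p : (F : α →₀ R) → F ∈ supported R R s → Prop}
    (single : ∀ a (ha : a ∈ s), p (Finsupp.single a 1) (single_mem_supported R 1 ha))
    (zero : p 0 (zero_mem _))
    (add : ∀ F G hF hG, p F hF → p G hG → p (F + G) (add_mem hF hG))
    (smul : ∀ (n : R) F hF, p F hF → p (n • F) (Submodule.smul_mem _ n hF))
    {F : α →₀ R} (hF : F ∈ supported R R s) : p F hF := by
  have hF' := hF
  rw [supported_eq_span_single] at hF'
  induction hF' using Submodule.span_induction with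
  | mem x hx =>
    obtain ⟨a, ha, rfl⟩ := hx
    exact single a ha
  | zero => exact zero
  | add F G hF' hG' ihF ihG =>
    rw [← supported_eq_span_single] at hF' hG'
    exact add F G hF' hG' (ihF hF') (ihG hG')
  | smul n F hF' ih =>
    rw [← supported_eq_span_single] at hF'
    exact smul n F hF' (ih hF')

noncomputable def groveMulₗ (op : List ℕ → List ℕ → Finset (List ℕ)) :
    (List ℕ →₀ ℤ) →ₗ[ℤ] (List ℕ →₀ ℤ) →ₗ[ℤ] List ℕ →₀ ℤ :=
  LinearMap.mk₂ ℤ (fun F G => F.sum fun a x => G.sum fun b y => (x * y) • groveSum (op a b))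
    (fun F F' G => Finsupp.sum_add_index' (by simp) fun a x x' => by
      simp only [add_mul, add_smul, Finsupp.sum_add])
    (fun n F G => by
      rw [Finsupp.sum_smul_index' (by simp), Finsupp.smul_sum]
      simp only [Finsupp.smul_sum, smul_eq_mul, mul_assoc, mul_smul])
    (fun F G G' => by
      rw [← Finsupp.sum_add]
      exact Finsupp.sum_congr fun a _ => Finsupp.sum_add_index' (by simp) fun b y y' => by
        simp only [mul_add, add_smul])
    (fun n F G => by
      rw [Finsupp.smul_sum]
      refine Finsupp.sum_congr fun a _ => ?_
      rw [Finsupp.sum_smul_index' (by simp), Finsupp.smul_sum]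
      simp only [smul_eq_mul, mul_left_comm, mul_smul])

noncomputable def graftₗ : (List ℕ →₀ ℤ) →ₗ[ℤ] (List ℕ →₀ ℤ) →ₗ[ℤ] List ℕ →₀ ℤ :=
  groveMulₗ fun u v => {graft u v}

local notation:max "X^" v:max => Finsupp.single v (1 : ℤ)
local infixl:70 " ≺ " => groveMulₗ dashv
local infixl:70 " ≻ " => groveMulₗ vdash
local infixl:70 " ⋆ " => groveMulₗ dplus

abbrev treeSpan : Submodule ℤ (List ℕ →₀ ℤ) := Finsupp.supported ℤ ℤ {v | TreeName v}

abbrev properTreeSpan : Submodule ℤ (List ℕ →₀ ℤ) :=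
  Finsupp.supported ℤ ℤ {v | TreeName v ∧ v ≠ []}

theorem groveMulₗ_apply (op : List ℕ → List ℕ → Finset (List ℕ)) (F G : List ℕ →₀ ℤ) :
    groveMulₗ op F G = F.sum fun a x => G.sum fun b y => (x * y) • groveSum (op a b) := rfl

theorem precF_eq_groveMulₗ (F G : List ℕ →₀ ℤ) : precF F G = F ≺ G := rfl

theorem succF_eq_groveMulₗ (F G : List ℕ →₀ ℤ) : succF F G = F ≻ G := rfl

theorem groveMulₗ_single_single (op : List ℕ → List ℕ → Finset (List ℕ)) (a b : List ℕ) :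
    groveMulₗ op X^a X^b = groveSum (op a b) := by
  simp [groveMulₗ]

theorem graftₗ_single_single (a c : List ℕ) : graftₗ X^a X^c = X^(graft a c) := by
  rw [graftₗ, groveMulₗ_single_single, groveSum, Finset.sum_singleton]

theorem groveSum_image {f : List ℕ → List ℕ} {S : Finset (List ℕ)} (hf : Set.InjOn f S) :
    groveSum (S.image f) = ∑ s ∈ S, X^(f s) :=
  Finset.sum_image hf

theorem groveSum_mem_supported {S : Finset (List ℕ)} {s : Set (List ℕ)} (hS : ∀ t ∈ S, t ∈ s) :
    groveSum S ∈ Finsupp.supported ℤ ℤ s :=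
  Submodule.sum_mem _ fun t ht => Finsupp.single_mem_supported ℤ 1 (hS t ht)

theorem groveMulₗ_mem_supported {op : List ℕ → List ℕ → Finset (List ℕ)} {s₁ s₂ s : Set (List ℕ)}
    (hop : ∀ a ∈ s₁, ∀ b ∈ s₂, ∀ t ∈ op a b, t ∈ s) {F G : List ℕ →₀ ℤ}
    (hF : F ∈ Finsupp.supported ℤ ℤ s₁) (hG : G ∈ Finsupp.supported ℤ ℤ s₂) :
    groveMulₗ op F G ∈ Finsupp.supported ℤ ℤ s := by
  rw [Finsupp.mem_supported'] at hF hG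
  rw [groveMulₗ_apply]
  refine Submodule.finsuppSum_mem _ _ _ _ fun a ha => Submodule.finsuppSum_mem _ _ _ _ fun b hb =>
    Submodule.smul_mem _ _ (groveSum_mem_supported (hop a ?_ b ?_))
  · exact not_not.mp fun h => ha (hF a h)
  · exact not_not.mp fun h => hb (hG b h)

theorem single_mem_treeSpan {v : List ℕ} (hv : TreeName v) : X^v ∈ treeSpan :=
  Finsupp.single_mem_supported ℤ 1 hv

theorem single_mem_properTreeSpan {v : List ℕ} (hv : TreeName v) (hv0 : v ≠ []) :
    X^v ∈ properTreeSpan :=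
  Finsupp.single_mem_supported ℤ 1 ⟨hv, hv0⟩

theorem star_mem_treeSpan (F G : List ℕ →₀ ℤ) : F ⋆ G ∈ treeSpan :=
  groveMulₗ_mem_supported (s₁ := Set.univ) (s₂ := Set.univ)
    (fun _ _ _ _ _ ht => TreeName.of_mem_dplus ht) (by simp) (by simp)

theorem single_star_mem_properTreeSpan {v : List ℕ} (hv0 : v ≠ []) (G : List ℕ →₀ ℤ) :
    X^v ⋆ G ∈ properTreeSpan := by
  refine groveMulₗ_mem_supported (s₁ := {v}) (s₂ := Set.univ) ?_
    (Finsupp.single_mem_supported ℤ 1 rfl) (by simp)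
  rintro a rfl b - t ht
  refine ⟨TreeName.of_mem_dplus ht, fun h => hv0 (List.eq_nil_of_length_eq_zero ?_)⟩
  have := length_of_mem_dplus ht
  simp only [h, List.length_nil] at this
  omega

theorem single_graft_prec {a c : List ℕ} (ha : TreeName a) (hc : TreeName c)
    (H : List ℕ →₀ ℤ) : X^(graft a c) ≺ H = graftₗ X^a (X^c ⋆ H) := by
  have hsingle : ∀ b, X^(graft a c) ≺ X^b = graftₗ X^a (X^c ⋆ X^b) := fun b => by
    rw [groveMulₗ_single_single, groveMulₗ_single_single, dashv_graft ha hc,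
      groveSum_image (graft_right_injective a).injOn, groveSum, map_sum]
    simp only [graftₗ_single_single]
  induction H using Finsupp.induction_linear with
  | zero => simp
  | add H H' h h' => simp [h, h']
  | single b n =>
    rw [← Finsupp.smul_single_one b n]
    simp only [map_smul, hsingle]

theorem succ_single_graft {d e : List ℕ} (hd : TreeName d) (he : TreeName e)
    (F : List ℕ →₀ ℤ) : F ≻ X^(graft d e) = graftₗ (F ⋆ X^d) X^e := by
  have hsingle : ∀ v, X^v ≻ X^(graft d e) = graftₗ (X^v ⋆ X^d) X^e := fun v => by
    rw [groveMulₗ_single_single, groveMulₗ_single_single, vdash_graft hd he,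
      groveSum_image fun u _ u' _ h => (graft_inj he.zero_notMem he.zero_notMem h).1, groveSum,
      map_sum, LinearMap.sum_apply]
    simp only [graftₗ_single_single]
  induction F using Finsupp.induction_linear with
  | zero => simp
  | add F F' h h' => simp [h, h']
  | single v n =>
    rw [← Finsupp.smul_single_one v n]
    simp only [map_smul, LinearMap.smul_apply, hsingle]

theorem graftₗ_prec {F G : List ℕ →₀ ℤ} (hF : F ∈ treeSpan) (hG : G ∈ treeSpan)
    (H : List ℕ →₀ ℤ) : graftₗ F G ≺ H = graftₗ F (G ⋆ H) := by
  induction hF using Finsupp.supported_induction with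
  | single a ha =>
    induction hG using Finsupp.supported_induction with
    | single c hc => rw [graftₗ_single_single, single_graft_prec ha hc]
    | zero => simp
    | add G G' _ _ h h' => simp [h, h']
    | smul n G _ h => simp [h]
  | zero => simp
  | add F F' _ _ h h' => simp [h, h']
  | smul n F _ h => simp [h]

theorem succ_graftₗ {G H : List ℕ →₀ ℤ} (hG : G ∈ treeSpan) (hH : H ∈ treeSpan)
    (F : List ℕ →₀ ℤ) : F ≻ graftₗ G H = graftₗ (F ⋆ G) H := by
  induction hG using Finsupp.supported_induction with
  | single d hd =>
    induction hH using Finsupp.supported_induction with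
    | single e he => rw [graftₗ_single_single, succ_single_graft hd he]
    | zero => simp
    | add H H' _ _ h h' => simp [h, h']
    | smul n H _ h => simp [h]
  | zero => simp
  | add G G' _ _ h h' => simp [h, h']
  | smul n G _ h => simp [h]

theorem star_eq_prec_add_succ {F G : List ℕ →₀ ℤ} (hF : F ∈ properTreeSpan)
    (hG : G ∈ properTreeSpan) : F ⋆ G = F ≺ G + F ≻ G := by
  induction hF using Finsupp.supported_induction with
  | single v hv =>
    induction hG using Finsupp.supported_induction with
    | single w hw => simp only [groveMulₗ_single_single, groveSum_dplus hv.1 hw.1 hv.2 hw.2]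
    | zero => simp
    | add G G' _ _ h h' => simp [h, h', add_add_add_comm]
    | smul n G _ h => simp [h]
  | zero => simp
  | add F F' _ _ h h' => simp [h, h', add_add_add_comm]
  | smul n F _ h => simp [h]

theorem single_nil_star {F : List ℕ →₀ ℤ} (hF : F ∈ treeSpan) : X^[] ⋆ F = F := by
  induction hF using Finsupp.supported_induction with
  | single w hw =>
    rw [groveMulₗ_single_single, dplus_nil_left hw, groveSum, Finset.sum_singleton]
  | zero => simp
  | add F F' _ _ h h' => simp [h, h']
  | smul n F _ h => simp [h]

theorem star_single_nil {F : List ℕ →₀ ℤ} (hF : F ∈ treeSpan) : F ⋆ X^[] = F := by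
  induction hF using Finsupp.supported_induction with
  | single v hv =>
    rw [groveMulₗ_single_single, dplus_nil_right hv, groveSum, Finset.sum_singleton]
  | zero => simp
  | add F F' _ _ h h' => simp [h, h']
  | smul n F _ h => simp [h]

theorem prec_prec_single_graft {a c : List ℕ} (ha : TreeName a) (hc : TreeName c)
    {W Z : List ℕ →₀ ℤ} (hassoc : (X^c ⋆ W) ⋆ Z = X^c ⋆ (W ⋆ Z)) :
    (X^(graft a c) ≺ W) ≺ Z = X^(graft a c) ≺ (W ⋆ Z) := by
  rw [single_graft_prec ha hc, graftₗ_prec (single_mem_treeSpan ha) (star_mem_treeSpan _ _),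
    hassoc, single_graft_prec ha hc]

theorem succ_prec_single_graft {d e : List ℕ} (hd : TreeName d) (he : TreeName e)
    (V Z : List ℕ →₀ ℤ) : (V ≻ X^(graft d e)) ≺ Z = V ≻ (X^(graft d e) ≺ Z) := by
  rw [succ_single_graft hd he, graftₗ_prec (star_mem_treeSpan _ _) (single_mem_treeSpan he),
    single_graft_prec hd he, succ_graftₗ (single_mem_treeSpan hd) (star_mem_treeSpan _ _)]

theorem star_succ_single_graft {p q : List ℕ} (hp : TreeName p) (hq : TreeName q)
    {V W : List ℕ →₀ ℤ} (hassoc : (V ⋆ W) ⋆ X^p = V ⋆ (W ⋆ X^p)) :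
    (V ⋆ W) ≻ X^(graft p q) = V ≻ (W ≻ X^(graft p q)) := by
  rw [succ_single_graft hp hq, hassoc, succ_single_graft hp hq,
    succ_graftₗ (star_mem_treeSpan _ _) (single_mem_treeSpan hq)]

theorem single_star_assoc {v w t : List ℕ} (hv : TreeName v) (hw : TreeName w)
    (ht : TreeName t) : (X^v ⋆ X^w) ⋆ X^t = X^v ⋆ (X^w ⋆ X^t) := by
  rcases eq_or_ne v [] with rfl | hv0
  · rw [single_nil_star (single_mem_treeSpan hw), single_nil_star (star_mem_treeSpan _ _)]
  rcases eq_or_ne w [] with rfl | hw0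
  · rw [star_single_nil (single_mem_treeSpan hv), single_nil_star (single_mem_treeSpan ht)]
  rcases eq_or_ne t [] with rfl | ht0
  · rw [star_single_nil (star_mem_treeSpan _ _), star_single_nil (single_mem_treeSpan hw)]
  obtain ⟨a, c, ha, hc, hvac⟩ := hv.exists_eq_graft hv0
  obtain ⟨d, e, hd, he, hwde⟩ := hw.exists_eq_graft hw0
  obtain ⟨p, q, hp, hq, htpq⟩ := ht.exists_eq_graft ht0
  have prec_prec : (X^v ≺ X^w) ≺ X^t = X^v ≺ (X^w ⋆ X^t) := by
    subst hvac
    exact prec_prec_single_graft ha hc (single_star_assoc hc hw ht)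
  have succ_prec : (X^v ≻ X^w) ≺ X^t = X^v ≻ (X^w ≺ X^t) := by
    subst hwde
    exact succ_prec_single_graft hd he _ _
  have star_succ : (X^v ⋆ X^w) ≻ X^t = X^v ≻ (X^w ≻ X^t) := by
    subst htpq
    exact star_succ_single_graft hp hq (single_star_assoc hv hw hp)
  have hv' := single_mem_properTreeSpan hv hv0
  have hw' := single_mem_properTreeSpan hw hw0
  have ht' := single_mem_properTreeSpan ht ht0
  calc (X^v ⋆ X^w) ⋆ X^t
      = (X^v ≺ X^w) ≺ X^t + (X^v ≻ X^w) ≺ X^t + (X^v ⋆ X^w) ≻ X^t := by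
        rw [star_eq_prec_add_succ (single_star_mem_properTreeSpan hv0 _) ht',
          star_eq_prec_add_succ hv' hw', map_add, LinearMap.add_apply,
          ← star_eq_prec_add_succ hv' hw']
    _ = X^v ≺ (X^w ⋆ X^t) + X^v ≻ (X^w ≺ X^t) + X^v ≻ (X^w ≻ X^t) := by
        rw [prec_prec, succ_prec, star_succ]
    _ = X^v ⋆ (X^w ⋆ X^t) := by
        rw [add_assoc, ← map_add, ← star_eq_prec_add_succ hw' ht',
          star_eq_prec_add_succ hv' (single_star_mem_properTreeSpan hw0 _)]
termination_by v.length + t.length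
decreasing_by all_goals subst_vars; simp only [length_graft]; omega

/-- The dendriform dialgebra axioms hold in the span of the monomials X^v indexed
by tree names, with X^u ≺ X^v = X^{u ⊣ v}, X^u ≻ X^v = X^{u ⊢ v} and
x ⋆ y = x ≺ y + x ≻ y. -/
theorem stmt16 (x y z : List ℕ) (hx : TreeName x) (hy : TreeName y) (hz : TreeName z)
    (hx0 : x ≠ []) (hy0 : y ≠ []) (hz0 : z ≠ []) :
    precF (precF (Finsupp.single x (1 : ℤ)) (Finsupp.single y 1)) (Finsupp.single z 1)
      = precF (Finsupp.single x 1)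
          (precF (Finsupp.single y 1) (Finsupp.single z 1)
            + succF (Finsupp.single y 1) (Finsupp.single z 1)) ∧
    precF (succF (Finsupp.single x (1 : ℤ)) (Finsupp.single y 1)) (Finsupp.single z 1)
      = succF (Finsupp.single x 1) (precF (Finsupp.single y 1) (Finsupp.single z 1)) ∧
    succF (precF (Finsupp.single x (1 : ℤ)) (Finsupp.single y 1)
            + succF (Finsupp.single x 1) (Finsupp.single y 1)) (Finsupp.single z 1)
      = succF (Finsupp.single x 1) (succF (Finsupp.single y 1) (Finsupp.single z 1)) := by
  simp only [precF_eq_groveMulₗ, succF_eq_groveMulₗ]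
  refine ⟨?_, ?_, ?_⟩
  · obtain ⟨a, c, ha, hc, rfl⟩ := hx.exists_eq_graft hx0
    rw [← star_eq_prec_add_succ (single_mem_properTreeSpan hy hy0)
      (single_mem_properTreeSpan hz hz0)]
    exact prec_prec_single_graft ha hc (single_star_assoc hc hy hz)
  · obtain ⟨d, e, hd, he, rfl⟩ := hy.exists_eq_graft hy0
    exact succ_prec_single_graft hd he _ _
  · obtain ⟨p, q, hp, hq, rfl⟩ := hz.exists_eq_graft hz0
    rw [← star_eq_prec_add_succ (single_mem_properTreeSpan hx hx0)
      (single_mem_properTreeSpan hy hy0)]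
    exact star_succ_single_graft hp hq (single_star_assoc hx hy hp)
end
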